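/- Let λ>0, μ>0, let z:[0,∞)→ℂ be measurable with ‖z‖_λ < ∞, and let Θ be an asymptotic characteristic for z satisfying ‖Θ(t,ϑ,ω) − ϑ − ωt‖_λ ≤ (μ/λ)‖z‖_λ. Let f_∞ be a probability density on the cylinder with M := sup_{k∈ℤ,η∈ℝ} |f̂_∞(k,η)| e^{λ(|k|+|η|)} < ∞. Then the function w(t) := ∫_{[0,2π)×ℝ} e^{iΘ(t,ϑ,ω)} f_∞(ϑ,ω) dϑ dω satisfies ‖w‖_λ ≤ (μ/λ)‖z‖_λ + M. -/

import Mathlib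

open MeasureTheory

noncomputable section

/-- Weighted sup-norm `sup_{t ≥ 0} |z t| e^{l t}` for `z : ℝ → ℂ`. -/
def expNormZ (l : ℝ) (z : ℝ → ℂ) : ℝ :=
  ⨆ t : {t : ℝ // 0 ≤ t}, ‖z t.1‖ * Real.exp (l * t.1)

/-- Finiteness of the weighted sup-norm for `z : ℝ → ℂ`. -/
def ExpBddZ (l : ℝ) (z : ℝ → ℂ) : Prop :=
  BddAbove (Set.range fun t : {t : ℝ // 0 ≤ t} => ‖z t.1‖ * Real.exp (l * t.1))

/-- Weighted sup-norm `sup_{t ≥ 0, ϑ, ω} |h t ϑ ω| e^{l t}`. -/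
def expNormH (l : ℝ) (h : ℝ → ℝ → ℝ → ℂ) : ℝ :=
  ⨆ p : {t : ℝ // 0 ≤ t} × ℝ × ℝ, ‖h p.1.1 p.2.1 p.2.2‖ * Real.exp (l * p.1.1)

/-- Finiteness of the weighted sup-norm for `h`. -/
def ExpBddH (l : ℝ) (h : ℝ → ℝ → ℝ → ℂ) : Prop :=
  BddAbove (Set.range fun p : {t : ℝ // 0 ≤ t} × ℝ × ℝ =>
    ‖h p.1.1 p.2.1 p.2.2‖ * Real.exp (l * p.1.1))

/-- `Θ` is an asymptotic characteristic for the order parameter `z`, with coupling `μ`: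
`Θ(t,ϑ,ω) = ϑ + ωt + μ ∫_t^∞ Im(e^{iΘ(s,ϑ,ω)} conj(z s)) ds` for all `t ≥ 0`. -/
def IsAsymChar (μ : ℝ) (z : ℝ → ℂ) (Θ : ℝ → ℝ → ℝ → ℝ) : Prop :=
  ∀ t : ℝ, 0 ≤ t → ∀ ϑ ω : ℝ,
    Θ t ϑ ω = ϑ + ω * t + μ * ∫ s in Set.Ioi t,
      (Complex.exp (Complex.I * (Θ s ϑ ω : ℂ)) * (starRingEnd ℂ) (z s)).im

/-- The reference measure on the cylinder `[0, 2π) × ℝ`. -/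
def cylMeasure : Measure (ℝ × ℝ) :=
  (volume.restrict (Set.Ico 0 (2 * Real.pi))).prod volume

/-- `f` is a probability density on the cylinder: nonnegative, `2π`-periodic in the
first variable, with total integral one over `[0, 2π) × ℝ`. -/
structure IsCylDensity (f : ℝ → ℝ → ℝ) : Prop where
  nonneg : ∀ ϑ ω : ℝ, 0 ≤ f ϑ ω
  periodic : ∀ ϑ ω : ℝ, f (ϑ + 2 * Real.pi) ω = f ϑ ω
  integrable : Integrable (fun p : ℝ × ℝ => f p.1 p.2) cylMeasure
  integral_one : (∫ p : ℝ × ℝ, f p.1 p.2 ∂cylMeasure) = 1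

/-- The Fourier transform `f̂(k,η) = ∫_{[0,2π)×ℝ} f(ϑ,ω) e^{-i(kϑ+ηω)} dϑ dω`. -/
def fHat (f : ℝ → ℝ → ℝ) (k : ℤ) (η : ℝ) : ℂ :=
  ∫ p : ℝ × ℝ, (f p.1 p.2 : ℂ) *
    Complex.exp (-Complex.I * (((k : ℝ) * p.1 + η * p.2 : ℝ) : ℂ)) ∂cylMeasure

/-- The order parameter `w(t) = ∫_{[0,2π)×ℝ} e^{iΘ(t,ϑ,ω)} f(ϑ,ω) dϑ dω`. -/
def orderParam (f : ℝ → ℝ → ℝ) (Θ : ℝ → ℝ → ℝ → ℝ) (t : ℝ) : ℂ :=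
  ∫ p : ℝ × ℝ, Complex.exp (Complex.I * (Θ t p.1 p.2 : ℂ)) * (f p.1 p.2 : ℂ) ∂cylMeasure

/-!
Bounding the integrand of the characteristic equation by `|z s| ≤ ‖z‖_λ e^{-λs}` gives
`|Θ(t,ϑ,ω) - ϑ - ωt| ≤ (μ/λ) ‖z‖_λ e^{-λt}`. Since `|e^{ia} - e^{ib}| ≤ |a - b|` and `f_∞` has mass
one, replacing `Θ` by the free flow `ϑ + ωt` changes `w(t)` by at most this amount, and for the
free flow `w(t)` is the Fourier coefficient `f̂_∞(-1,-t)`, which is at most `M e^{-λ(1+t)}`.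
-/

open Set Filter

lemma norm_cexp_I_mul_sub_le (a b : ℝ) :
    ‖Complex.exp (Complex.I * a) - Complex.exp (Complex.I * b)‖ ≤ |a - b| := by
  have hfactor : Complex.exp (Complex.I * a) - Complex.exp (Complex.I * b)
      = Complex.exp (Complex.I * b) * (Complex.exp (Complex.I * ((a - b : ℝ) : ℂ)) - 1) := by
    rw [mul_sub, mul_one, ← Complex.exp_add]
    push_cast
    ring_nf
  rw [hfactor, norm_mul, Complex.norm_exp_I_mul_ofReal, one_mul]
  exact Real.norm_exp_I_mul_ofReal_sub_one_le

lemma norm_le_expNormZ_mul_exp {l : ℝ} {z : ℝ → ℂ} (hz : ExpBddZ l z) {t : ℝ} (ht : 0 ≤ t) :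
    ‖z t‖ ≤ expNormZ l z * Real.exp (-(l * t)) := by
  rw [Real.exp_neg, ← div_eq_mul_inv, le_div_iff₀ (Real.exp_pos _)]
  exact le_ciSup hz ⟨t, ht⟩

lemma IsAsymChar.abs_sub_le {μ l C : ℝ} {z : ℝ → ℂ} {Θ : ℝ → ℝ → ℝ → ℝ}
    (hΘ : IsAsymChar μ z Θ) (hμ : 0 ≤ μ) (hl : 0 < l)
    (hz : ∀ s, 0 ≤ s → ‖z s‖ ≤ C * Real.exp (-(l * s))) {t : ℝ} (ht : 0 ≤ t) (ϑ ω : ℝ) :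
    |Θ t ϑ ω - (ϑ + ω * t)| ≤ μ / l * C * Real.exp (-(l * t)) := by
  have hdecay : IntegrableOn (fun s => C * Real.exp (-(l * s))) (Ioi t) := by
    have := (integrableOn_exp_mul_Ioi (neg_neg_of_pos hl) t).const_mul C
    simp only [neg_mul] at this
    exact this
  have hintegrand : ∀ᵐ s ∂volume.restrict (Ioi t),
      ‖(Complex.exp (Complex.I * (Θ s ϑ ω : ℂ)) * (starRingEnd ℂ) (z s)).im‖ ≤
        C * Real.exp (-(l * s)) := by
    refine (ae_restrict_iff' measurableSet_Ioi).2 (Eventually.of_forall fun s hs => ?_)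
    calc _ ≤ ‖Complex.exp (Complex.I * (Θ s ϑ ω : ℂ)) * (starRingEnd ℂ) (z s)‖ :=
          Complex.abs_im_le_norm _
      _ = ‖z s‖ := by rw [norm_mul, Complex.norm_exp_I_mul_ofReal, one_mul, Complex.norm_conj]
      _ ≤ _ := hz s (ht.trans hs.le)
  rw [hΘ t ht ϑ ω, add_sub_cancel_left, abs_mul, abs_of_nonneg hμ, ← Real.norm_eq_abs]
  calc μ * ‖∫ s in Ioi t, _‖ ≤ μ * ∫ s in Ioi t, C * Real.exp (-(l * s)) := by
        gcongr
        exact norm_integral_le_of_norm_le hdecay hintegrand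
    _ = μ / l * C * Real.exp (-(l * t)) := by
        simp_rw [← neg_mul]
        rw [integral_const_mul, integral_exp_mul_Ioi (neg_neg_of_pos hl)]
        field_simp

lemma integral_cexp_free_flow_eq_fHat (f : ℝ → ℝ → ℝ) (t : ℝ) :
    ∫ p : ℝ × ℝ, Complex.exp (Complex.I * ((p.1 + p.2 * t : ℝ) : ℂ)) * (f p.1 p.2 : ℂ)
      ∂cylMeasure = fHat f (-1) (-t) := by
  refine integral_congr_ae (Eventually.of_forall fun p => ?_)
  dsimp only
  rw [mul_comm]
  push_cast
  ring_nf

lemma IsCylDensity.integrable_cexp_mul {f : ℝ → ℝ → ℝ} (hf : IsCylDensity f) (φ : ℝ × ℝ → ℝ)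
    (hφ : Measurable φ) :
    Integrable (fun p => Complex.exp (Complex.I * (φ p : ℂ)) * (f p.1 p.2 : ℂ)) cylMeasure :=
  hf.integrable.ofReal.bdd_mul (c := 1) (by fun_prop)
    (Eventually.of_forall fun p => (Complex.norm_exp_I_mul_ofReal _).le)

lemma norm_orderParam_le {f : ℝ → ℝ → ℝ} (hf : IsCylDensity f) {Θ : ℝ → ℝ → ℝ → ℝ} {t ε : ℝ}
    (hΘ : ∀ ϑ ω, |Θ t ϑ ω - (ϑ + ω * t)| ≤ ε) :
    ‖orderParam f Θ t‖ ≤ ‖fHat f (-1) (-t)‖ + ε := by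
  have hε : 0 ≤ ε := (abs_nonneg _).trans (hΘ 0 0)
  set G : ℝ × ℝ → ℂ := fun p => Complex.exp (Complex.I * (Θ t p.1 p.2 : ℂ)) * (f p.1 p.2 : ℂ)
  set F : ℝ × ℝ → ℂ := fun p =>
    Complex.exp (Complex.I * ((p.1 + p.2 * t : ℝ) : ℂ)) * (f p.1 p.2 : ℂ)
  by_cases hG : Integrable G cylMeasure
  swap
  · rw [orderParam, integral_undef hG, norm_zero]
    positivity
  have hF : Integrable F cylMeasure := hf.integrable_cexp_mul _ (by fun_prop)
  have hdiff : ‖∫ p, (G p - F p) ∂cylMeasure‖ ≤ ε := by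
    refine (norm_integral_le_of_norm_le (hf.integrable.const_mul ε)
      (Eventually.of_forall fun p => ?_)).trans_eq ?_
    · rw [← sub_mul, norm_mul, Complex.norm_real, Real.norm_of_nonneg (hf.nonneg _ _)]
      gcongr
      · exact hf.nonneg _ _
      · exact (norm_cexp_I_mul_sub_le _ _).trans (hΘ p.1 p.2)
    · rw [integral_const_mul, hf.integral_one, mul_one]
  calc ‖orderParam f Θ t‖ = ‖(∫ p, F p ∂cylMeasure) + ∫ p, (G p - F p) ∂cylMeasure‖ := by
        rw [integral_sub hG hF, add_sub_cancel]
        rfl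
    _ ≤ ‖fHat f (-1) (-t)‖ + ε := by
        rw [integral_cexp_free_flow_eq_fHat]
        exact (norm_add_le _ _).trans (by gcongr)

theorem orderParam_bound_exp_general
    (l μ : ℝ) (hl : 0 < l) (hμ : 0 < μ) (z : ℝ → ℂ)
    (hzb : ExpBddZ l z) (Θ : ℝ → ℝ → ℝ → ℝ) (hΘ : IsAsymChar μ z Θ)
    (f : ℝ → ℝ → ℝ) (hf : IsCylDensity f)
    (M : ℝ) (hM : ∀ (k : ℤ) (η : ℝ),
      ‖fHat f k η‖ * Real.exp (l * (|(k : ℝ)| + |η|)) ≤ M) :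
    expNormZ l (orderParam f Θ) ≤ μ / l * expNormZ l z + M := by
  refine ciSup_le fun ⟨t, ht⟩ => ?_
  have hw := norm_orderParam_le hf
    (hΘ.abs_sub_le hμ.le hl (fun s hs => norm_le_expNormZ_mul_exp hzb hs) ht)
  have hcoeff : ‖fHat f (-1) (-t)‖ * Real.exp (l * t) ≤ M :=
    (hM (-1) (-t)).trans' (by gcongr; simp [abs_of_nonneg ht])
  calc ‖orderParam f Θ t‖ * Real.exp (l * t)
      ≤ (‖fHat f (-1) (-t)‖ + μ / l * expNormZ l z * Real.exp (-(l * t))) * Real.exp (l * t) := by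
        gcongr
    _ = ‖fHat f (-1) (-t)‖ * Real.exp (l * t) + μ / l * expNormZ l z := by
        rw [add_mul, mul_assoc, ← Real.exp_add, neg_add_cancel, Real.exp_zero, mul_one]
    _ ≤ μ / l * expNormZ l z + M := by linarith

/-- Bound on the new order parameter (Lemma 2 of the paper): `‖w‖_λ ≤ (μ/λ)‖z‖_λ + M`. -/
theorem orderParam_bound_exp
    (l μ : ℝ) (hl : 0 < l) (hμ : 0 < μ) (z : ℝ → ℂ) (hz : Measurable z)
    (hzb : ExpBddZ l z) (Θ : ℝ → ℝ → ℝ → ℝ) (hΘ : IsAsymChar μ z Θ)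
    (hΘb : expNormH l (fun t ϑ ω => ((Θ t ϑ ω - ϑ - ω * t : ℝ) : ℂ)) ≤
      μ / l * expNormZ l z)
    (f : ℝ → ℝ → ℝ) (hf : IsCylDensity f)
    (M : ℝ) (hM : ∀ (k : ℤ) (η : ℝ),
      ‖fHat f k η‖ * Real.exp (l * (|(k : ℝ)| + |η|)) ≤ M) :
    expNormZ l (orderParam f Θ) ≤ μ / l * expNormZ l z + M :=
  orderParam_bound_exp_general l μ hl hμ z hzb Θ hΘ f hf M hM
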